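/- (EVL intersection correctness.) For any pattern P of size k ≥ 2 and any MSS Z, the set of starting positions of P in Z is contained in the intersection over m = 2, …, k of the sets of starting positions of the deletion patterns del_m(P): StartPos(P, Z) ⊆ ⋂_{m=2}^{k} StartPos(del_m(P), Z). In particular, P cannot start at a position p of Z at which some deletion subpattern del_m(P) with m ≥ 2 does not start. -/

import Mathlib

/-- The two Allen-style temporal relations used: `b` = before, `c` = co-occurs. -/
inductive TRel : Type
  | b : TRel
  | c : TRel
deriving DecidableEq

/-- A state: a variable label together with an abstraction value. -/
structure TState (Ab Lab : Type*) where
  F : Lab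
  V : Ab

/-- A state interval: a state together with start and end times `s ≤ e`. -/
structure StateInterval (Ab Lab : Type*) where
  F : Lab
  V : Ab
  s : ℝ
  e : ℝ
  hse : s ≤ e

/-- A multivariate state sequence: a finite sequence of state intervals with
nondecreasing start times. -/
structure MSS (Ab Lab : Type*) where
  l : ℕ
  E : Fin l → StateInterval Ab Lab
  mono : ∀ i j : Fin l, i ≤ j → (E i).s ≤ (E j).s

/-- The temporal relation between two state intervals (the earlier one first):
`b` if the first ends strictly before the second starts, `c` otherwise. -/
noncomputable def irel {Ab Lab : Type*} (Ei Ej : StateInterval Ab Lab) : TRel :=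
  if Ei.e < Ej.s then TRel.b else TRel.c

/-- A temporal pattern of size `k`: a sequence of `k` states together with a map
assigning a temporal relation to each pair of indices (only `i < j` is relevant). -/
structure Pattern (Ab Lab : Type*) where
  k : ℕ
  S : Fin k → TState Ab Lab
  R : Fin k → Fin k → TRel

/-- `Z` contains `P`: there is a strictly increasing map matching the states of `P`
to state intervals of `Z` realizing the prescribed temporal relations. -/
def Contains {Ab Lab : Type*} (Z : MSS Ab Lab) (P : Pattern Ab Lab) : Prop :=
  ∃ π : Fin P.k → Fin Z.l, StrictMono π ∧
    (∀ i, (P.S i).F = (Z.E (π i)).F ∧ (P.S i).V = (Z.E (π i)).V) ∧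
    (∀ i j : Fin P.k, i < j → irel (Z.E (π i)) (Z.E (π j)) = P.R i j)

/-- `Q` is a subpattern of `P`: there is a strictly increasing index map preserving
states and the relations between pairs of indices. -/
def Subpattern {Ab Lab : Type*} (Q P : Pattern Ab Lab) : Prop :=
  ∃ σ : Fin Q.k → Fin P.k, StrictMono σ ∧
    (∀ i, Q.S i = P.S (σ i)) ∧
    (∀ i j : Fin Q.k, i < j → Q.R i j = P.R (σ i) (σ j))

/-- The strictly increasing map `Fin (P.k - 1) → Fin P.k` that skips index `m`. -/
def delMap {Ab Lab : Type*} (P : Pattern Ab Lab) (m : Fin P.k) :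
    Fin (P.k - 1) → Fin P.k := fun i =>
  Fin.cast (Nat.succ_pred_eq_of_pos m.pos)
    ((Fin.cast (Nat.succ_pred_eq_of_pos m.pos).symm m).succAbove i)

/-- The deletion pattern `del_m(P)`: the pattern of size `P.k - 1` obtained from `P`
by deleting the `m`-th state and restricting the relation map. -/
def del {Ab Lab : Type*} (P : Pattern Ab Lab) (m : Fin P.k) : Pattern Ab Lab where
  k := P.k - 1
  S := fun i => P.S (delMap P m i)
  R := fun i j => P.R (delMap P m i) (delMap P m j)

/-- The set of starting positions of `P` in `Z`: positions `p` such that some strictly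
increasing witness `π` of `P ∈ Z` has `π(1) = p`. -/
def StartPos {Ab Lab : Type*} (P : Pattern Ab Lab) (Z : MSS Ab Lab) : Set (Fin Z.l) :=
  {p | ∃ (hk : 0 < P.k) (π : Fin P.k → Fin Z.l), StrictMono π ∧
    (∀ i, (P.S i).F = (Z.E (π i)).F ∧ (P.S i).V = (Z.E (π i)).V) ∧
    (∀ i j : Fin P.k, i < j → irel (Z.E (π i)) (Z.E (π j)) = P.R i j) ∧
    π ⟨0, hk⟩ = p}

section Deletion

variable {Ab Lab : Type*}

theorem delMap_strictMono (P : Pattern Ab Lab) (m : Fin P.k) : StrictMono (delMap P m) :=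
  fun _ _ hij => Fin.strictMono_succAbove _ hij

theorem delMap_val_zero (P : Pattern Ab Lab) {m : Fin P.k} (hm : 0 < (m : ℕ))
    (h : 0 < P.k - 1) : (delMap P m ⟨0, h⟩ : ℕ) = 0 := by
  simp only [delMap, Fin.val_cast]
  rw [Fin.succAbove_of_castSucc_lt _ _ (by simpa [Fin.lt_def] using hm)]
  rfl

theorem startPos_subset_of_embedding {Q P : Pattern Ab Lab} (Z : MSS Ab Lab)
    (σ : Fin Q.k → Fin P.k) (hσ : StrictMono σ) (hS : ∀ i, Q.S i = P.S (σ i))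
    (hR : ∀ i j, i < j → Q.R i j = P.R (σ i) (σ j)) (hQ : 0 < Q.k)
    (hσ₀ : (σ ⟨0, hQ⟩ : ℕ) = 0) :
    StartPos P Z ⊆ StartPos Q Z := by
  rintro p ⟨hP, π, hπ, hstates, hrel, rfl⟩
  refine ⟨hQ, π ∘ σ, hπ.comp hσ, fun i => hS i ▸ hstates (σ i),
    fun i j hij => (hR i j hij).symm ▸ hrel _ _ (hσ hij), ?_⟩
  exact congrArg π (Fin.ext hσ₀)

end Deletion

/-- EVL intersection correctness: the starting positions of P are contained in the
intersection over m = 2, …, k of the starting positions of the deletion patterns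
del_m(P) (those retaining the first state). -/
theorem startPos_subset_iInter_del {Ab Lab : Type*} (P : Pattern Ab Lab) (hk : 2 ≤ P.k)
    (Z : MSS Ab Lab) :
    StartPos P Z ⊆
      ⋂ m ∈ {m : Fin P.k | 0 < (m : ℕ)}, StartPos (del P m) Z := by
  refine Set.subset_iInter₂ fun m (hm : 0 < (m : ℕ)) => ?_
  have hdel : 0 < (del P m).k := by simp only [del]; omega
  exact startPos_subset_of_embedding Z (delMap P m) (delMap_strictMono P m) (fun _ => rfl)
    (fun _ _ _ => rfl) hdel (delMap_val_zero P hm hdel)
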